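/- Let m, N ≥ 1 and T ≥ 2 be integers. On a probability space, let A_1,…,A_T be random subsets of {1,…,N} with |A_t| ≤ m almost surely, let n_{a,t} := #{τ ∈ {1,…,t−1} : a ∈ A_τ}, and let w_1,…,w_T be standard Gaussian N(0,1) random variables with arbitrary joint dependence (in particular they may depend on the sets A_t). Then E[ ∑_{t=1}^{T} |w_t| · ∑_{a ∈ A_t} √(1/(n_{a,t}+1)) ] ≤ 4·√(m·N·T·ln(T)). -/

import Mathlib

/-!
Write `S t = ∑_{a ∈ A t} (n a t + 1)^{-1/2}`; pointwise the integrand is at most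
`(max_t |w t|) * ∑_t S t`. Grouped by arms, the `k`-th pull of an arm contributes `k^{-1/2}`, so an
arm pulled `k_a` times contributes at most `2 √k_a`, and Cauchy–Schwarz with `∑_a k_a ≤ m T` gives
`∑_t S t ≤ 2 √(m N T)`. For the Gaussian maximum, `λ |x| ≤ b - 1 + e^{λ |x| - b}` dominates every
`|w t|` by one function whose expectation the Gaussian mgf computes; with `b = 2 log (2T)` and
`λ = √b` it is `√(2 log (2T)) ≤ 2 √(log T)`.
-/

open MeasureTheory ProbabilityTheory Finset

lemma two_mul_sqrt_add_sqrt_inv_le {x : ℝ} (hx : 0 ≤ x) :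
    2 * √x + √(1 / (x + 1)) ≤ 2 * √(x + 1) := by
  have hx1 : 0 < √(x + 1) := Real.sqrt_pos.2 (by linarith)
  rw [one_div, Real.sqrt_inv, ← le_sub_iff_add_le', inv_le_iff_one_le_mul₀ hx1]
  nlinarith [Real.sq_sqrt hx, Real.sq_sqrt (by linarith : 0 ≤ x + 1), sq_nonneg (√x - √(x + 1))]

section PullCount

variable {α : Type*} [DecidableEq α]

def pullCount (B : ℕ → Finset α) (a : α) (t : ℕ) : ℕ := #{τ ∈ Icc 1 (t - 1) | a ∈ B τ}

lemma pullCount_add_two (B : ℕ → Finset α) (a : α) (T : ℕ) :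
    pullCount B a (T + 2) = pullCount B a (T + 1) + if a ∈ B (T + 1) then 1 else 0 := by
  simp only [pullCount, card_filter, Nat.add_sub_cancel, show T + 2 - 1 = T + 1 by omega]
  exact sum_Icc_succ_top (by omega) _

lemma sum_inv_sqrt_pullCount_le (B : ℕ → Finset α) (a : α) (T : ℕ) :
    ∑ t ∈ Icc 1 T with a ∈ B t, √(1 / (pullCount B a t + 1)) ≤ 2 * √(pullCount B a (T + 1)) := by
  induction T with
  | zero => simp
  | succ T ih =>
    rw [sum_filter, sum_Icc_succ_top (by omega), ← sum_filter, pullCount_add_two]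
    split_ifs with h
    · push_cast
      linarith [two_mul_sqrt_add_sqrt_inv_le (Nat.cast_nonneg (α := ℝ) (pullCount B a (T + 1)))]
    · simpa using ih

lemma sum_sum_eq_sum_sum_filter {β : Type*} [AddCommMonoid β] (U : Finset α) (B : ℕ → Finset α)
    (hB : ∀ t, B t ⊆ U) (s : Finset ℕ) (g : α → ℕ → β) :
    ∑ t ∈ s, ∑ a ∈ B t, g a t = ∑ a ∈ U, ∑ t ∈ s with a ∈ B t, g a t :=
  sum_comm' fun t a => by simp only [mem_filter]; exact ⟨fun h => ⟨h, hB t h.2⟩, And.left⟩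

lemma sum_pullCount_eq (U : Finset α) (B : ℕ → Finset α) (hB : ∀ t, B t ⊆ U) (T : ℕ) :
    ∑ a ∈ U, pullCount B a (T + 1) = ∑ t ∈ Icc 1 T, #(B t) := by
  simp only [pullCount, Nat.add_sub_cancel, card_eq_sum_ones]
  exact (sum_sum_eq_sum_sum_filter U B hB _ _).symm

lemma sum_sum_inv_sqrt_pullCount_le (U : Finset α) (B : ℕ → Finset α) (hB : ∀ t, B t ⊆ U)
    (T : ℕ) :
    ∑ t ∈ Icc 1 T, ∑ a ∈ B t, √(1 / (pullCount B a t + 1))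
      ≤ 2 * √((#U * ∑ t ∈ Icc 1 T, #(B t) : ℕ)) := by
  calc ∑ t ∈ Icc 1 T, ∑ a ∈ B t, √(1 / (pullCount B a t + 1))
      = ∑ a ∈ U, ∑ t ∈ Icc 1 T with a ∈ B t, √(1 / (pullCount B a t + 1)) :=
        sum_sum_eq_sum_sum_filter U B hB _ _
    _ ≤ ∑ a ∈ U, 2 * √(pullCount B a (T + 1)) :=
        sum_le_sum fun a _ => sum_inv_sqrt_pullCount_le B a T
    _ = 2 * ∑ a ∈ U, √1 * √(pullCount B a (T + 1)) := by simp [mul_sum]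
    _ ≤ 2 * (√(∑ a ∈ U, 1) * √(∑ a ∈ U, (pullCount B a (T + 1) : ℝ))) := by
        gcongr
        exact Real.sum_sqrt_mul_sqrt_le U (fun _ => zero_le_one) fun _ => Nat.cast_nonneg _
    _ = 2 * √((#U * ∑ t ∈ Icc 1 T, #(B t) : ℕ)) := by
        rw [← Real.sqrt_mul (by simp), ← Nat.cast_sum, sum_pullCount_eq U B hB]
        simp

end PullCount

lemma mul_abs_le_exp_add_exp (l b x : ℝ) :
    l * |x| ≤ b - 1 + Real.exp (-b) * (Real.exp (l * x) + Real.exp (-l * x)) := by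
  have hexp : Real.exp (l * |x|) ≤ Real.exp (l * x) + Real.exp (-l * x) := by
    rcases abs_cases x with ⟨hx, -⟩ | ⟨hx, -⟩ <;> rw [hx]
    · linarith [Real.exp_pos (-l * x)]
    · rw [mul_neg, ← neg_mul]; linarith [Real.exp_pos (l * x)]
  calc l * |x| ≤ b - 1 + Real.exp (l * |x| - b) := by linarith [Real.add_one_le_exp (l * |x| - b)]
    _ = b - 1 + Real.exp (-b) * Real.exp (l * |x|) := by rw [← Real.exp_add]; ring_nf
    _ ≤ _ := by gcongr

lemma integrable_exp_mul_and_integral_of_map_eq_gaussianReal {Ω : Type*} [MeasurableSpace Ω]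
    {P : Measure Ω} [IsProbabilityMeasure P] {X : Ω → ℝ} (hX : P.map X = gaussianReal 0 1)
    (l : ℝ) :
    Integrable (fun ω => Real.exp (l * X ω)) P ∧
      ∫ ω, Real.exp (l * X ω) ∂P = Real.exp (l ^ 2 / 2) := by
  have hmgf := mgf_gaussianReal hX l
  simp only [zero_mul, NNReal.coe_one, one_mul, zero_add] at hmgf
  exact ⟨mgf_pos_iff.1 (hmgf ▸ Real.exp_pos _), hmgf⟩

lemma exists_integrable_abs_le_of_map_eq_gaussianReal {Ω ι : Type*} [MeasurableSpace Ω]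
    (P : Measure Ω) [IsProbabilityMeasure P] (s : Finset ι) (hs : s.Nonempty) (w : ι → Ω → ℝ)
    (hw : ∀ t ∈ s, P.map (w t) = gaussianReal 0 1) :
    ∃ G : Ω → ℝ, Integrable G P ∧ (∀ ω, ∀ t ∈ s, |w t ω| ≤ G ω) ∧
      ∫ ω, G ω ∂P = √(2 * Real.log (2 * #s)) := by
  set b := Real.log (2 * #s)
  have hs2 : (1 : ℝ) < 2 * #s := by
    have : (1 : ℝ) ≤ #s := by exact_mod_cast hs.card_pos
    linarith
  have hb : 0 < b := Real.log_pos hs2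
  set l := √(2 * b)
  have hl : 0 < l := by positivity
  have hl2 : l ^ 2 / 2 = b := by rw [Real.sq_sqrt (by positivity)]; ring
  let G := fun ω => (2 * b - 1 + Real.exp (-(2 * b)) *
    ∑ t ∈ s, (Real.exp (l * w t ω) + Real.exp (-l * w t ω))) / l
  have hmgf := fun t ht => integrable_exp_mul_and_integral_of_map_eq_gaussianReal (hw t ht)
  have hint : ∀ t ∈ s, Integrable (fun ω => Real.exp (l * w t ω) + Real.exp (-l * w t ω)) P :=
    fun t ht => (hmgf t ht l).1.add (hmgf t ht (-l)).1
  refine ⟨G, ?_, fun ω t ht => ?_, ?_⟩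
  · exact ((integrable_const _).add ((integrable_finsetSum s hint).const_mul _)).div_const _
  · rw [le_div_iff₀ hl, mul_comm]
    refine (mul_abs_le_exp_add_exp l (2 * b) (w t ω)).trans ?_
    gcongr
    exact single_le_sum (f := fun t => Real.exp (l * w t ω) + Real.exp (-l * w t ω))
      (fun _ _ => by positivity) ht
  · have hterm : ∀ t ∈ s, ∫ ω, Real.exp (l * w t ω) + Real.exp (-l * w t ω) ∂P
        = 2 * Real.exp b := fun t ht => by
      rw [integral_add (hmgf t ht l).1 (hmgf t ht (-l)).1, (hmgf t ht l).2, (hmgf t ht (-l)).2,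
        neg_sq, hl2]
      ring
    have hexp : Real.exp (-(2 * b)) * (#s * (2 * Real.exp b)) = 1 := by
      rw [show -(2 * b) = -b + -b by ring, Real.exp_add, Real.exp_neg, Real.exp_log (by linarith)]
      field_simp
    simp only [G, integral_div, integral_add (integrable_const _)
      ((integrable_finsetSum s hint).const_mul _), integral_const_mul,
      integral_finsetSum s hint, sum_congr rfl hterm, sum_const, nsmul_eq_mul, integral_const,
      probReal_univ, smul_eq_mul, one_mul, hexp]
    rw [sub_add_cancel, div_eq_iff hl.ne', Real.mul_self_sqrt (by positivity)]

lemma integral_sum_abs_mul_le {Ω ι : Type*} [MeasurableSpace Ω] (P : Measure Ω) (s : Finset ι)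
    (hs : s.Nonempty) (w S : ι → Ω → ℝ) {G : Ω → ℝ} (hG : Integrable G P)
    (hwG : ∀ ω, ∀ t ∈ s, |w t ω| ≤ G ω) (hS : ∀ ω, ∀ t ∈ s, 0 ≤ S t ω) {K : ℝ}
    (hK : ∀ ω, ∑ t ∈ s, S t ω ≤ K) :
    ∫ ω, ∑ t ∈ s, |w t ω| * S t ω ∂P ≤ (∫ ω, G ω ∂P) * K := by
  rw [← integral_mul_const]
  refine integral_mono_of_nonneg (.of_forall fun ω => ?_) (hG.mul_const K) (.of_forall fun ω => ?_)
  · exact sum_nonneg fun t ht => mul_nonneg (abs_nonneg _) (hS ω t ht)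
  obtain ⟨t₀, ht₀⟩ := hs
  calc ∑ t ∈ s, |w t ω| * S t ω ≤ ∑ t ∈ s, G ω * S t ω :=
        sum_le_sum fun t ht => mul_le_mul_of_nonneg_right (hwG ω t ht) (hS ω t ht)
    _ = G ω * ∑ t ∈ s, S t ω := (mul_sum ..).symm
    _ ≤ G ω * K := mul_le_mul_of_nonneg_left (hK ω) ((abs_nonneg _).trans (hwG ω t₀ ht₀))

lemma sqrt_two_mul_log_two_mul_le {T : ℝ} (hT : 2 ≤ T) :
    √(2 * Real.log (2 * T)) ≤ 2 * √(Real.log T) := by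
  rw [show 2 * √(Real.log T) = √(4 * Real.log T) by
    rw [Real.sqrt_mul zero_le_four, show (4 : ℝ) = 2 ^ 2 by norm_num, Real.sqrt_sq zero_le_two]]
  apply Real.sqrt_le_sqrt
  rw [Real.log_mul two_ne_zero (by linarith)]
  linarith [Real.log_le_log two_pos hT]

theorem stmt8_general {Ω : Type*} [MeasurableSpace Ω] (P : Measure Ω) [IsProbabilityMeasure P]
    (m N T : ℕ) (hT : 2 ≤ T)
    (A : ℕ → Ω → Finset ℕ)
    (hAsub : ∀ t ω, A t ω ⊆ Finset.Icc 1 N)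
    (hAcard : ∀ t ω, (A t ω).card ≤ m)
    (n : ℕ → ℕ → Ω → ℕ)
    (hn : ∀ a t ω, n a t ω = ((Finset.Icc 1 (t - 1)).filter (fun τ => a ∈ A τ ω)).card)
    (w : ℕ → Ω → ℝ)
    (hwlaw : ∀ t ∈ Finset.Icc 1 T, Measure.map (w t) P = ProbabilityTheory.gaussianReal 0 1) :
    ∫ ω, ∑ t ∈ Finset.Icc 1 T, |w t ω| *
        ∑ a ∈ A t ω, Real.sqrt (1 / ((n a t ω : ℝ) + 1)) ∂P
      ≤ 4 * Real.sqrt ((m : ℝ) * N * T * Real.log T) := by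
  have hs : (Icc 1 T).Nonempty := nonempty_Icc.2 (by omega)
  obtain ⟨G, hG, hwG, hGint⟩ :=
    exists_integrable_abs_le_of_map_eq_gaussianReal P (Icc 1 T) hs w hwlaw
  have hpulls : ∀ ω, ∑ t ∈ Icc 1 T, ∑ a ∈ A t ω, √(1 / ((n a t ω : ℝ) + 1))
      ≤ 2 * √((m : ℝ) * N * T) := fun ω => by
    have hcard : ∑ t ∈ Icc 1 T, #(A t ω) ≤ T * m := by
      simpa using sum_le_card_nsmul (Icc 1 T) _ m fun t _ => hAcard t ω
    simp only [hn]
    refine (sum_sum_inv_sqrt_pullCount_le (Icc 1 N) (fun t => A t ω) (hAsub · ω) T).trans ?_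
    rw [Nat.card_Icc, Nat.add_sub_cancel]
    gcongr
    exact_mod_cast (Nat.mul_le_mul_left N hcard).trans_eq (by ring)
  calc _ ≤ (∫ ω, G ω ∂P) * (2 * √((m : ℝ) * N * T)) :=
        integral_sum_abs_mul_le P _ hs w _ hG hwG
          (fun ω t _ => sum_nonneg fun _ _ => Real.sqrt_nonneg _) hpulls
    _ ≤ 2 * √(Real.log T) * (2 * √((m : ℝ) * N * T)) := by
        rw [hGint, Nat.card_Icc, Nat.add_sub_cancel]
        gcongr
        exact sqrt_two_mul_log_two_mul_le (by exact_mod_cast hT)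
    _ = 4 * √((m : ℝ) * N * T * Real.log T) := by
        rw [Real.sqrt_mul (x := (m : ℝ) * N * T) (by positivity)]
        ring

/-- deviation term of CL-SG. Let `m, N ≥ 1` and `T ≥ 2`. For random subsets
`A t` of `{1,…,N}` of cardinality at most `m`, pull counts
`n a t = #{τ ∈ {1,…,t−1} : a ∈ A τ}`, and standard Gaussian seeds `w t` with arbitrary joint
dependence, `E[∑_{t=1}^T |w t| ∑_{a∈A t} √(1/(n a t + 1))] ≤ 4·√(m N T ln T)`. -/
theorem stmt8 {Ω : Type*} [MeasurableSpace Ω] (P : Measure Ω) [IsProbabilityMeasure P]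
    (m N T : ℕ) (hm : 1 ≤ m) (hN : 1 ≤ N) (hT : 2 ≤ T)
    (A : ℕ → Ω → Finset ℕ)
    (hAmeas : ∀ a t, MeasurableSet {ω | a ∈ A t ω})
    (hAsub : ∀ t ω, A t ω ⊆ Finset.Icc 1 N)
    (hAcard : ∀ t ω, (A t ω).card ≤ m)
    (n : ℕ → ℕ → Ω → ℕ)
    (hn : ∀ a t ω, n a t ω = ((Finset.Icc 1 (t - 1)).filter (fun τ => a ∈ A τ ω)).card)
    (w : ℕ → Ω → ℝ)
    (hwmeas : ∀ t, Measurable (w t))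
    (hwlaw : ∀ t ∈ Finset.Icc 1 T, Measure.map (w t) P = ProbabilityTheory.gaussianReal 0 1) :
    ∫ ω, ∑ t ∈ Finset.Icc 1 T, |w t ω| *
        ∑ a ∈ A t ω, Real.sqrt (1 / ((n a t ω : ℝ) + 1)) ∂P
      ≤ 4 * Real.sqrt ((m : ℝ) * N * T * Real.log T) :=
  stmt8_general P m N T hT A hAsub hAcard n hn w hwlaw
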